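/- There exists a subfamily S ⊆ R_2 that is a D_n^↑-basic-separator set: every K ∈ S is a regular language with K ∩ D_n^↑ = ∅, and every regular language L ⊆ Σ_n^* with L ∩ D_n^↑ = ∅ is contained in a finite union of members of S. -/

import Mathlib

set_option linter.unusedVariables false

/-! ### Alphabet, effects, Dyck languages -/

abbrev Sig (n : ℕ) := Fin n × Bool

def letterEff {n : ℕ} (a : Sig n) : Fin n → ℤ :=
  fun j => if j = a.1 then (if a.2 then 1 else -1) else 0

def wordEff {n : ℕ} (w : List (Sig n)) : Fin n → ℤ :=
  (w.map letterEff).sum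

/-- The Dyck language `D_n`. -/
def Dyck (n : ℕ) : Language (Sig n) :=
  {w | wordEff w = 0 ∧ ∀ u, u <+: w → ∀ j, 0 ≤ wordEff u j}

/-- The coverability Dyck language `D_n^↑`. -/
def CovDyck (n : ℕ) : Language (Sig n) :=
  {w | ∀ u, u <+: w → ∀ j, 0 ≤ wordEff u j}

/-- The `ℤ`-Dyck language `D_n^ℤ`. -/
def ZDyck (n : ℕ) : Language (Sig n) :=
  {w | wordEff w = 0}

/-! ### VASS -/

structure VASS (A : Type) where
  Q : Type
  C : Type
  finQ : Finite Q
  finC : Finite C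
  E : Set (Q × Option A × (C → ℤ) × Q)
  finE : E.Finite

inductive VASS.NRun {A : Type} (V : VASS A) :
    (V.Q × (V.C → ℕ)) → List A → (V.Q × (V.C → ℕ)) → Prop
  | refl (cfg : V.Q × (V.C → ℕ)) : VASS.NRun V cfg [] cfg
  | step {q : V.Q} {c : V.C → ℕ} {a : Option A} {d : V.C → ℤ} {q' : V.Q}
      {c' : V.C → ℕ} {w : List A} {last : V.Q × (V.C → ℕ)} :
      (q, a, d, q') ∈ V.E →
      (∀ j, (c' j : ℤ) = (c j : ℤ) + d j) →
      VASS.NRun V (q', c') w last →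
      VASS.NRun V (q, c) (a.toList ++ w) last

/-- An initialized VASS: generalized initial/final configurations,
with `none` playing the role of `ω`. -/
structure InitVASS (A : Type) extends VASS A where
  qin : Q
  qout : Q
  cin : C → Option ℕ
  cout : C → Option ℕ

/-- The reachability language of an initialized VASS. -/
def InitVASS.lang {A : Type} (V : InitVASS A) : Language A :=
  {w | ∃ c0 cl : V.C → ℕ,
      V.toVASS.NRun (V.qin, c0) w (V.qout, cl) ∧
      (∀ j m, V.cin j = some m → c0 j = m) ∧
      (∀ j m, V.cout j = some m → cl j = m)}

/-! ### Transducers -/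

structure Transducer (G A : Type) where
  Q : Type
  finQ : Finite Q
  start : Q
  accept : Set Q
  trans : Set (Q × (Option G × Option A) × Q)
  finT : trans.Finite

inductive Transducer.Path {G A : Type} (T : Transducer G A) :
    T.Q → List G → List A → T.Q → Prop
  | refl (q : T.Q) : Transducer.Path T q [] [] q
  | step {q q' qf : T.Q} {g : Option G} {a : Option A} {u : List G} {v : List A} :
      (q, (g, a), q') ∈ T.trans →
      Transducer.Path T q' u v qf →
      Transducer.Path T q (g.toList ++ u) (a.toList ++ v) qf

/-- The relation recognized by a transducer. -/
def Transducer.rel {G A : Type} (T : Transducer G A) (u : List G) (v : List A) : Prop :=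
  ∃ qf ∈ T.accept, T.Path T.start u v qf

/-- `T⁻¹(L)`. -/
def Transducer.invImage {G A : Type} (T : Transducer G A) (L : Language A) : Language G :=
  {u | ∃ v ∈ L, T.rel u v}

/-! ### Regular separability -/

def RegSep {A : Type} (L1 L2 : Language A) : Prop :=
  ∃ R : Language A, R.IsRegular ∧ L1 ≤ R ∧ ∀ w ∈ R, w ∉ L2

/-! ### Linear sets and regular approximations -/

structure LinSet (n : ℕ) where
  base : Fin n → ℤ
  periods : Set (Fin n → ℤ)
  finP : periods.Finite

def LinSet.toSet {n : ℕ} (L : LinSet n) : Set (Fin n → ℤ) :=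
  {x | ∃ p ∈ AddSubmonoid.closure L.periods, x = L.base + p}

def inBox {n : ℕ} (k : ℕ) (x : Fin n → ℤ) : Prop :=
  ∀ j, -(k : ℤ) ≤ x j ∧ x j ≤ (k : ℤ)

/-- Reachability in the ε-NFA underlying the `k`-th regular approximation of `L`:
states are vectors in `[-k,k]^n`, letters move by their effect, ε-transitions
subtract a period. -/
inductive KReach {n : ℕ} (L : LinSet n) (k : ℕ) :
    (Fin n → ℤ) → List (Sig n) → (Fin n → ℤ) → Prop
  | refl (x : Fin n → ℤ) (h : inBox k x) : KReach L k x [] x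
  | letter {x y : Fin n → ℤ} {w : List (Sig n)} (a : Sig n)
      (h : inBox k x) (h' : inBox k (x + letterEff a)) :
      KReach L k (x + letterEff a) w y → KReach L k x (a :: w) y
  | eps {x y : Fin n → ℤ} {w : List (Sig n)} {p : Fin n → ℤ}
      (hp : p ∈ L.periods) (h : inBox k x) (h' : inBox k (x - p)) :
      KReach L k (x - p) w y → KReach L k x w y

/-- The `k`-th regular approximation `K^k(L)`. -/
def KApprox {n : ℕ} (L : LinSet n) (k : ℕ) : Language (Sig n) :=
  {w | ∃ y, KReach L k 0 w y ∧ y ∈ L.toSet}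

/-! ### The `⊕⁺` operation and the families `R_ℓ` -/

def posPlus {n : ℕ} (K L : Set (Fin n → ℤ)) : Set (Fin n → ℤ) :=
  {x | (∀ j, 0 ≤ x j) ∧ ∃ a ∈ K, (∀ j, 0 ≤ a j) ∧ ∃ b ∈ L, x = a + b}

def posFoldAux {n : ℕ} : Set (Fin n → ℤ) → List (Set (Fin n → ℤ)) → Set (Fin n → ℤ)
  | S, [] => S
  | S, L :: Ls => posFoldAux (posPlus S L) Ls

/-- `posFold [L₁, …, L_ℓ] = L₁ ⊕⁺ ⋯ ⊕⁺ L_ℓ` (associated to the left); for `ℓ = 1`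
it is `L₁` itself. -/
def posFold {n : ℕ} : List (Set (Fin n → ℤ)) → Set (Fin n → ℤ)
  | [] => ∅
  | L :: Ls => posFoldAux L Ls

/-- The family `R_ℓ`. -/
def RFam (n ℓ : ℕ) : Set (Language (Sig n)) :=
  {K | ∃ (k : ℕ) (Ls : List (LinSet n)), Ls.length = ℓ ∧
      (0 : Fin n → ℤ) ∉ posFold (Ls.map LinSet.toSet) ∧
      K = (Ls.map (fun L => KApprox L k)).prod}

/-- `R_{≤ m} = ⋃_{1 ≤ i ≤ m} R_i`. -/
def RleFam (n m : ℕ) : Set (Language (Sig n)) :=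
  ⋃ i ∈ Set.Icc 1 m, RFam n i

/-- `R = ⋃_{ℓ ≥ 1} R_ℓ`. -/
def RAll (n : ℕ) : Set (Language (Sig n)) :=
  ⋃ i ∈ Set.Ici 1, RFam n i

/-! ### Basic separator sets -/

def IsBasicSepSet {n : ℕ} (S : Language (Sig n)) (B : Set (Language (Sig n))) : Prop :=
  (∀ K ∈ B, K.IsRegular ∧ ∀ w ∈ K, w ∉ S) ∧
  (∀ L : Language (Sig n), L.IsRegular → (∀ w ∈ L, w ∉ S) →
    ∃ F ⊆ B, F.Finite ∧ ∀ w ∈ L, ∃ K ∈ F, w ∈ K)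

/-! Extra defs for specific statements -/

/-- `u ∼_A v`: the words induce the same state transformation in the DFA `M`. -/
def simEq {α σ : Type} (M : DFA α σ) (u v : List α) : Prop :=
  ∀ p : σ, M.evalFrom p u = M.evalFrom p v

/-- Assemble `w₀ m₁ w₁ ⋯ m_k w_k` over `Σ ⊎ Σ#` (`Sum.inl` = plain, `Sum.inr` = marked). -/
def assemble {α : Type} : List (List α) → List α → List (α ⊕ α)
  | [], _ => []
  | w :: _, [] => w.map Sum.inl
  | w :: ws, m :: ms => w.map Sum.inl ++ Sum.inr m :: assemble ws ms

/-- The set of effects of a language. -/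
def effSet {n : ℕ} (L : Language (Sig n)) : Set (Fin n → ℤ) :=
  {v | ∃ w ∈ L, wordEff w = v}

/-- `Mod(μ, v)`. -/
def ModLang (n μ : ℕ) (v : Fin n → ℤ) : Language (Sig n) :=
  {w | ∀ j, wordEff w j ≡ v j [ZMOD (μ : ℤ)]}

/-- `ModSet(μ, v)`: base `v`, periods `{±μ·e_i}`. -/
def ModSet (n μ : ℕ) (v : Fin n → ℤ) : LinSet n where
  base := v
  periods := (Set.range fun i : Fin n => (μ : ℤ) • Pi.single i (1 : ℤ)) ∪
    (Set.range fun i : Fin n => -((μ : ℤ) • Pi.single i (1 : ℤ)))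
  finP := (Set.finite_range _).union (Set.finite_range _)

/-- `Cov(k, i)`. -/
def CovLang (n k : ℕ) (i : Fin n) : Language (Sig n) :=
  {x | ∃ w w', x = w ++ w' ∧ wordEff w i < 0 ∧
      ∀ u, u <+: w → u ≠ w → 0 ≤ wordEff u i ∧ wordEff u i ≤ (k : ℤ)}

/-- `L_{neg,i}`: base `-e_i`, periods `{±e_j : j ≠ i}`. -/
def LNeg (n : ℕ) (i : Fin n) : LinSet n where
  base := -Pi.single i 1
  periods := ((fun j : Fin n => Pi.single j (1 : ℤ)) '' {j | j ≠ i}) ∪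
    ((fun j : Fin n => -Pi.single j (1 : ℤ)) '' {j | j ≠ i})
  finP := ((Set.toFinite _).image _).union ((Set.toFinite _).image _)

/-- `Z`: base `0`, periods `{±e_j}`. -/
def ZSet (n : ℕ) : LinSet n where
  base := 0
  periods := (Set.range fun j : Fin n => Pi.single j (1 : ℤ)) ∪
    (Set.range fun j : Fin n => -Pi.single j (1 : ℤ))
  finP := (Set.finite_range _).union (Set.finite_range _)

/-! The language `C_ℓ` over `Σ₂` -/

def ltrA1 : Sig 2 := (0, true)
def ltrA2 : Sig 2 := (1, true)
def ltrB1 : Sig 2 := (0, false)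
def ltrB2 : Sig 2 := (1, false)

def fwdWord (j : ℕ) : List (Sig 2) := ltrA1 :: List.replicate j ltrA2
def bwdWord (j : ℕ) : List (Sig 2) := ltrB1 :: List.replicate j ltrB2

def segLang (j : ℕ) : Language (Sig 2) :=
  KStar.kstar ({fwdWord j, bwdWord j} : Language (Sig 2))

def aPlusLang : Language (Sig 2) :=
  {w | ∃ m : ℕ, 0 < m ∧ w = List.replicate m ltrA1}

def CLang (ℓ : ℕ) : Language (Sig 2) :=
  aPlusLang * ((List.range ℓ).map (fun j => segLang (j + 1))).prod


/-
A regular language avoiding `D_n^↑` is accepted by a finite automaton `M`. For each state `q`, the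
counter values `c ∈ ℕ^n` from which `M` can still accept while no counter drops below zero form an
upward closed set; by Dickson's lemma it has finitely many minimal elements, hence a bound `B` such
that capping all counters at `B` never leaves it. Along an accepted word `w`, freeze at `B` every
counter that has exceeded `B`. If no counter `i` of `w` reaches `-1` before exceeding `B`, these
capped configurations can all reach acceptance, by induction from the end of `w`; at the start
this yields an accepted word of `D_n^↑`. So every accepted word has a counter that leaves `[0, B]`
through `-1`.

For `k ≥ 1`, the words whose `i`-th counter leaves `[0, k]` through `-1` are exactly
`K^k(L_{neg,i}) · K^k(Z)`: the periods of `L_{neg,i}` do not touch coordinate `i`, so its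
approximation follows counter `i` through the window `[-k, k]`, while `K^k(Z)` accepts everything.
This language is recognised by a counter automaton frozen outside `[0, k]`, and it lies in `R_2`
because every vector of `L_{neg,i}` has `i`-th coordinate `-1`.
-/

section

variable {n : ℕ}

@[simp]
theorem wordEff_nil : wordEff ([] : List (Sig n)) = 0 := by
  simp [wordEff]

@[simp]
theorem wordEff_cons (a : Sig n) (w : List (Sig n)) :
    wordEff (a :: w) = letterEff a + wordEff w := by
  simp [wordEff]

@[simp]
theorem wordEff_append (u v : List (Sig n)) : wordEff (u ++ v) = wordEff u + wordEff v := by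
  simp [wordEff]

theorem letterEff_apply_of_ne (a : Sig n) {j : Fin n} (h : j ≠ a.1) : letterEff a j = 0 := by
  simp [letterEff, h]

theorem letterEff_bounds (a : Sig n) (j : Fin n) : -1 ≤ letterEff a j ∧ letterEff a j ≤ 1 := by
  unfold letterEff
  split_ifs <;> norm_num

theorem letterEff_eq (a : Sig n) :
    letterEff a = if a.2 then Pi.single a.1 1 else -Pi.single a.1 1 := by
  obtain ⟨i, _ | _⟩ := a <;> funext j <;> by_cases h : j = i <;> simp [letterEff, h]

theorem neg_length_le_wordEff (w : List (Sig n)) (j : Fin n) : -(w.length : ℤ) ≤ wordEff w j := by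
  induction w with
  | nil => simp
  | cons a w ih =>
    have := (letterEff_bounds a j).1
    simp only [wordEff_cons, Pi.add_apply, List.length_cons]
    omega

theorem exists_prefix_wordEff_eq_neg_one {i : Fin n} {w : List (Sig n)}
    (h : ∃ v, v <+: w ∧ wordEff v i < 0) :
    ∃ u, u <+: w ∧ wordEff u i = -1 ∧ ∀ v, v <+: u → v ≠ u → 0 ≤ wordEff v i := by
  induction w using List.reverseRecOn with
  | nil =>
    obtain ⟨v, hv, hneg⟩ := h
    simp [List.prefix_nil.1 hv] at hneg
  | append_singleton w a ih =>
    by_cases hw : ∃ v, v <+: w ∧ wordEff v i < 0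
    · obtain ⟨u, hu, hu₁, hu₂⟩ := ih hw
      exact ⟨u, hu.trans (List.prefix_append w [a]), hu₁, hu₂⟩
    · push Not at hw
      obtain ⟨v, hv, hneg⟩ := h
      obtain rfl : v = w ++ [a] :=
        (List.prefix_concat_iff.1 hv).resolve_right fun hvw => (hw v hvw).not_gt hneg
      refine ⟨w ++ [a], List.prefix_rfl, ?_,
        fun v hv hne => hw v ((List.prefix_concat_iff.1 hv).resolve_left hne)⟩
      have := hw w List.prefix_rfl
      have := letterEff_bounds a i
      simp only [wordEff_append, wordEff_cons, wordEff_nil, add_zero, Pi.add_apply] at hneg ⊢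
      omega

def exitsBelow (k : ℕ) (i : Fin n) : Language (Sig n) :=
  {w | ∃ u, u <+: w ∧ wordEff u i = -1 ∧
    ∀ v, v <+: u → v ≠ u → 0 ≤ wordEff v i ∧ wordEff v i ≤ k}

theorem exitsBelow_mono {k k' : ℕ} (hk : k ≤ k') (i : Fin n) :
    exitsBelow (n := n) k i ≤ exitsBelow k' i := by
  rintro w ⟨u, hu, hu₁, hu₂⟩
  exact ⟨u, hu, hu₁, fun v hv hne =>
    ⟨(hu₂ v hv hne).1, (hu₂ v hv hne).2.trans (by exact_mod_cast hk)⟩⟩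

theorem append_mem_exitsBelow {k : ℕ} {i : Fin n} {w : List (Sig n)} (hw : w ∈ exitsBelow k i)
    (v : List (Sig n)) : w ++ v ∈ exitsBelow k i := by
  obtain ⟨u, hu, hu₁, hu₂⟩ := hw
  exact ⟨u, List.prefix_append_of_prefix hu, hu₁, hu₂⟩

theorem exitsBelow_disjoint_covDyck {k : ℕ} {i : Fin n} {w : List (Sig n)}
    (hw : w ∈ exitsBelow k i) : w ∉ CovDyck n := by
  obtain ⟨u, hu, hu₁, -⟩ := hw
  intro hcov
  have := hcov u hu i
  omega

theorem DFA.evalFrom_of_forall_step_eq {α σ : Type*} (M : DFA α σ) {s : σ}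
    (hs : ∀ a, M.step s a = s) (w : List α) : M.evalFrom s w = s := by
  induction w with
  | nil => rfl
  | cons a w ih => rw [DFA.evalFrom_cons, hs, ih]

/-- The state is the `i`-th counter, frozen as soon as it leaves `[0, k]`. -/
def exitDFA (k : ℕ) (i : Fin n) : DFA (Sig n) (Set.Icc (-1 : ℤ) (k + 1)) where
  step z a :=
    if h : 0 ≤ (z : ℤ) ∧ (z : ℤ) ≤ k then
      ⟨z + letterEff a i, by have := letterEff_bounds a i; constructor <;> omega⟩
    else z
  start := ⟨0, by constructor <;> omega⟩
  accept := {z | (z : ℤ) = -1}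

theorem exitDFA_evalFrom_eq_neg_one_iff {k : ℕ} {i : Fin n} (w : List (Sig n))
    (z : Set.Icc (-1 : ℤ) (k + 1)) :
    ((exitDFA k i).evalFrom z w : ℤ) = -1 ↔ ∃ u, u <+: w ∧ z + wordEff u i = -1 ∧
      ∀ v, v <+: u → v ≠ u → 0 ≤ z + wordEff v i ∧ z + wordEff v i ≤ k := by
  induction w generalizing z with
  | nil => simp
  | cons a w ih =>
    by_cases hz : 0 ≤ (z : ℤ) ∧ (z : ℤ) ≤ k
    · have hstep : ((exitDFA k i).step z a : ℤ) = z + letterEff a i := by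
        simp [exitDFA, hz]
      rw [DFA.evalFrom_cons, ih, hstep]
      constructor
      · rintro ⟨u, hu, hu₁, hu₂⟩
        refine ⟨a :: u, List.cons_prefix_cons.2 ⟨rfl, hu⟩, ?_, fun v hv hne => ?_⟩
        · simp only [wordEff_cons, Pi.add_apply]
          linarith
        rcases List.prefix_cons_iff.1 hv with rfl | ⟨t, rfl, ht⟩
        · simpa using hz
        · have := hu₂ t ht (by rintro rfl; exact hne rfl)
          simp only [wordEff_cons, Pi.add_apply]
          constructor <;> linarith
      · rintro ⟨u, hu, hu₁, hu₂⟩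
        rcases List.prefix_cons_iff.1 hu with rfl | ⟨t, rfl, ht⟩
        · simp only [wordEff_nil, Pi.zero_apply, add_zero] at hu₁
          omega
        · simp only [wordEff_cons, Pi.add_apply] at hu₁
          refine ⟨t, ht, by linarith, fun v hv hne => ?_⟩
          have := hu₂ (a :: v) (List.cons_prefix_cons.2 ⟨rfl, hv⟩) (by simpa using hne)
          simp only [wordEff_cons, Pi.add_apply] at this
          constructor <;> linarith
    · rw [DFA.evalFrom_of_forall_step_eq _ fun b => by simp [exitDFA, hz]]
      constructor
      · intro h
        exact ⟨[], List.nil_prefix, by simpa using h,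
          fun v hv hne => absurd (List.prefix_nil.1 hv) hne⟩
      · rintro ⟨u, -, hu₁, hu₂⟩
        by_contra hne
        obtain rfl | hu := eq_or_ne u []
        · simp at hu₁
          exact hne hu₁
        · simpa using hz (by simpa using hu₂ [] List.nil_prefix hu.symm)

theorem exitDFA_accepts (k : ℕ) (i : Fin n) : (exitDFA k i).accepts = exitsBelow k i := by
  ext w
  change ((exitDFA k i).evalFrom (exitDFA k i).start w : ℤ) = -1 ↔ _
  have hstart : ((exitDFA k i).start : ℤ) = 0 := rfl
  rw [exitDFA_evalFrom_eq_neg_one_iff, hstart]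
  simp only [zero_add]
  rfl

theorem exitsBelow_isRegular (k : ℕ) (i : Fin n) : (exitsBelow k i).IsRegular :=
  ⟨_, inferInstance, exitDFA k i, exitDFA_accepts k i⟩

theorem inBox_zero (k : ℕ) : inBox (n := n) k 0 := fun j => by simp

theorem inBox_single {k : ℕ} {i : Fin n} {c : ℤ} (hc : -(k : ℤ) ≤ c ∧ c ≤ k) :
    inBox k (Pi.single i c) := by
  intro j
  by_cases h : j = i
  · subst h
    simpa using hc
  · simp [h]

theorem inBox_letterEff {k : ℕ} (hk : 1 ≤ k) (a : Sig n) : inBox k (letterEff a) := fun j => by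
  have := letterEff_bounds a j
  omega

theorem inBox_single_add_letterEff {k : ℕ} (hk : 1 ≤ k) {i : Fin n} {c : ℤ}
    (hc : -(k : ℤ) ≤ c ∧ c ≤ k) {a : Sig n} (ha : a.1 ≠ i) :
    inBox k (Pi.single i c + letterEff a) := by
  intro j
  by_cases h : j = i
  · subst h
    simpa [letterEff_apply_of_ne a (Ne.symm ha)] using hc
  · simpa [Pi.single_apply, h] using inBox_letterEff hk a j

theorem KReach.cons_of_letterEff_mem {L : LinSet n} {k : ℕ} {x y : Fin n → ℤ}
    {w : List (Sig n)} {a : Sig n} (ha : letterEff a ∈ L.periods) (hx : inBox k x)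
    (hxa : inBox k (x + letterEff a)) (h : KReach L k x w y) : KReach L k x (a :: w) y :=
  .letter a hx hxa (.eps ha hxa (by rwa [add_sub_cancel_right]) (by rwa [add_sub_cancel_right]))

theorem KReach.apply_eq_add_wordEff {L : LinSet n} {k : ℕ} {i : Fin n}
    (hL : ∀ p ∈ L.periods, p i = 0) {x y : Fin n → ℤ} {w : List (Sig n)}
    (h : KReach L k x w y) :
    y i = x i + wordEff w i ∧
      ∀ u, u <+: w → -(k : ℤ) ≤ x i + wordEff u i ∧ x i + wordEff u i ≤ k := by
  induction h with
  | refl x hx => exact ⟨by simp, fun u hu => by simpa [List.prefix_nil.1 hu] using hx i⟩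
  | letter a hx _ _ ih =>
    obtain ⟨ih₁, ih₂⟩ := ih
    refine ⟨by simp only [ih₁, wordEff_cons, Pi.add_apply]; ring, fun u hu => ?_⟩
    rcases List.prefix_cons_iff.1 hu with rfl | ⟨t, rfl, ht⟩
    · simpa using hx i
    · simpa [add_assoc] using ih₂ t ht
  | eps hp _ _ _ ih => simpa [hL _ hp] using ih

theorem KReach.single_of_forall_prefix {L : LinSet n} {k : ℕ} (hk : 1 ≤ k) {i : Fin n}
    (hL : ∀ a : Sig n, a.1 ≠ i → letterEff a ∈ L.periods) {w : List (Sig n)} {c : ℤ}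
    (hw : ∀ u, u <+: w → -(k : ℤ) ≤ c + wordEff u i ∧ c + wordEff u i ≤ k) :
    KReach L k (Pi.single i c) w (Pi.single i (c + wordEff w i)) := by
  induction w generalizing c with
  | nil => simpa using KReach.refl _ (inBox_single (by simpa using hw [] List.prefix_rfl))
  | cons a w ih =>
    have hc : -(k : ℤ) ≤ c ∧ c ≤ k := by simpa using hw [] List.nil_prefix
    have htail : ∀ u, u <+: w → -(k : ℤ) ≤ c + letterEff a i + wordEff u i ∧
        c + letterEff a i + wordEff u i ≤ k := fun u hu => by
      simpa [add_assoc] using hw (a :: u) (List.cons_prefix_cons.2 ⟨rfl, hu⟩)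
    by_cases hai : a.1 = i
    · have hstep : Pi.single i c + letterEff a = Pi.single i (c + letterEff a i) := by
        funext j
        by_cases h : j = i
        · subst h
          simp
        · simp [h, letterEff_apply_of_ne a (hai ▸ h)]
      have hbox : inBox k (Pi.single i c + letterEff a) := by
        simpa [hstep] using inBox_single (by simpa using htail [] List.nil_prefix)
      refine .letter a (inBox_single hc) hbox ?_
      rw [hstep]
      simpa [add_assoc] using ih htail
    · have h₀ : letterEff a i = 0 := letterEff_apply_of_ne a (Ne.symm hai)
      simpa [h₀] using (ih (by simpa [h₀] using htail)).cons_of_letterEff_mem (hL a hai)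
        (inBox_single hc) (inBox_single_add_letterEff hk hc hai)

theorem letterEff_mem_zSet_periods (a : Sig n) : letterEff a ∈ (ZSet n).periods := by
  rw [letterEff_eq]
  split_ifs
  exacts [Or.inl ⟨a.1, rfl⟩, Or.inr ⟨a.1, rfl⟩]

theorem mem_kApprox_zSet {k : ℕ} (hk : 1 ≤ k) (w : List (Sig n)) : w ∈ KApprox (ZSet n) k := by
  refine ⟨0, ?_, 0, zero_mem _, (add_zero 0).symm⟩
  induction w with
  | nil => exact .refl 0 (inBox_zero k)
  | cons a w ih =>
    exact ih.cons_of_letterEff_mem (letterEff_mem_zSet_periods a) (inBox_zero k)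
      (by simpa using inBox_letterEff hk a)

theorem letterEff_mem_lNeg_periods {i : Fin n} {a : Sig n} (ha : a.1 ≠ i) :
    letterEff a ∈ (LNeg n i).periods := by
  rw [letterEff_eq]
  split_ifs
  exacts [Or.inl ⟨a.1, ha, rfl⟩, Or.inr ⟨a.1, ha, rfl⟩]

theorem lNeg_periods_apply_self {i : Fin n} {p : Fin n → ℤ} (hp : p ∈ (LNeg n i).periods) :
    p i = 0 := by
  rcases hp with ⟨j, hj, rfl⟩ | ⟨j, hj, rfl⟩ <;> simp [Ne.symm hj]

theorem lNeg_toSet_apply_self {i : Fin n} {x : Fin n → ℤ} (hx : x ∈ (LNeg n i).toSet) :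
    x i = -1 := by
  obtain ⟨p, hp, rfl⟩ := hx
  have hpi : p i = 0 := by
    induction hp using AddSubmonoid.closure_induction with
    | mem p hp => exact lNeg_periods_apply_self hp
    | zero => rfl
    | add p q _ _ hp hq => simp [hp, hq]
  simp [LNeg, hpi]

theorem mem_kApprox_lNeg {k : ℕ} (hk : 1 ≤ k) {i : Fin n} {w : List (Sig n)} :
    w ∈ KApprox (LNeg n i) k ↔
      wordEff w i = -1 ∧ ∀ u, u <+: w → -(k : ℤ) ≤ wordEff u i ∧ wordEff u i ≤ k := by
  constructor
  · rintro ⟨y, hy, hyL⟩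
    obtain ⟨h₁, h₂⟩ := hy.apply_eq_add_wordEff fun p hp => lNeg_periods_apply_self hp
    exact ⟨by simpa [lNeg_toSet_apply_self hyL] using h₁.symm, by simpa using h₂⟩
  · rintro ⟨h₁, h₂⟩
    have := KReach.single_of_forall_prefix (L := LNeg n i) hk (fun a => letterEff_mem_lNeg_periods)
      (c := 0) (by simpa using h₂)
    exact ⟨Pi.single i (-1), by simpa [h₁] using this, 0, zero_mem _, by simp [LNeg, Pi.single_neg]⟩

def covSeparator (k : ℕ) (i : Fin n) : Language (Sig n) :=
  KApprox (LNeg n i) k * KApprox (ZSet n) k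

theorem covSeparator_mem_rFam (k : ℕ) (i : Fin n) : covSeparator k i ∈ RFam n 2 := by
  refine ⟨k, [LNeg n i, ZSet n], rfl, ?_, by simp [covSeparator]⟩
  rintro ⟨-, a, ha, ha₀, -⟩
  have := ha₀ i
  rw [lNeg_toSet_apply_self ha] at this
  omega

theorem covSeparator_eq_exitsBelow {k : ℕ} (hk : 1 ≤ k) (i : Fin n) :
    covSeparator k i = exitsBelow k i := by
  ext w
  rw [covSeparator, Language.mem_mul]
  constructor
  · rintro ⟨u, hu, v, -, rfl⟩
    obtain ⟨hu₁, hu₂⟩ := (mem_kApprox_lNeg hk).1 hu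
    obtain ⟨u', hu', h₁, h₂⟩ :=
      exists_prefix_wordEff_eq_neg_one (i := i) ⟨u, List.prefix_rfl, by omega⟩
    exact ⟨u', hu'.trans (List.prefix_append u v), h₁,
      fun v' hv' hne => ⟨h₂ v' hv' hne, (hu₂ v' (hv'.trans hu')).2⟩⟩
  · rintro ⟨u, ⟨v, rfl⟩, h₁, h₂⟩
    refine ⟨u, (mem_kApprox_lNeg hk).2 ⟨h₁, fun v' hv' => ?_⟩, v, mem_kApprox_zSet hk v, rfl⟩
    rcases eq_or_ne v' u with rfl | hne
    · omega
    · have := h₂ v' hv' hne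
      omega

theorem IsUpperSet.exists_min_const_mem {ι : Type*} [Finite ι] {s : Set (ι → ℕ)}
    (hs : IsUpperSet s) : ∃ B : ℕ, ∀ c ∈ s, (fun j => min (c j) B) ∈ s := by
  have hfin : {c | Minimal (· ∈ s) c}.Finite :=
    WellQuasiOrderedLE.finite_of_isAntichain (setOfPred_minimal_antichain _)
  obtain ⟨M, hM⟩ := hfin.bddAbove
  obtain ⟨B, hB⟩ := (Set.finite_range M).bddAbove
  refine ⟨B, fun c hc => ?_⟩
  obtain ⟨d, hdc, hd⟩ := (Set.isPWO_of_wellQuasiOrderedLE s).exists_le_minimal hc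
  exact hs (fun j => le_min (hdc j) ((hM hd j).trans (hB ⟨j, rfl⟩))) hd.prop

theorem exists_min_const_mem_of_isUpperSet {σ ι : Type*} [Finite σ] [Finite ι]
    {s : σ → Set (ι → ℕ)} (hs : ∀ q, IsUpperSet (s q)) :
    ∃ B : ℕ, ∀ q, ∀ c ∈ s q, (fun j => min (c j) B) ∈ s q := by
  choose B hB using fun q => (hs q).exists_min_const_mem
  obtain ⟨B', hB'⟩ := (Set.finite_range B).bddAbove
  exact ⟨B', fun q c hc => hs q (fun j => min_le_min_left _ (hB' ⟨q, rfl⟩)) (hB q c hc)⟩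

open Classical in
/-- A counter that has ever exceeded `B` is frozen at `B`, standing for "arbitrarily large". -/
noncomputable def capEff (B : ℕ) (u : List (Sig n)) (j : Fin n) : ℕ :=
  if ∀ v, v <+: u → wordEff v j ≤ B then (wordEff u j).toNat else B

theorem capEff_nil (B : ℕ) : capEff B ([] : List (Sig n)) = 0 := by
  funext j
  simp [capEff]

theorem capEff_eq_wordEff {B : ℕ} {u : List (Sig n)} {j : Fin n} (hu : u ∉ exitsBelow B j)
    (hj : ∀ v, v <+: u → wordEff v j ≤ B) : (capEff B u j : ℤ) = wordEff u j := by
  have hnonneg : 0 ≤ wordEff u j := by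
    by_contra hneg
    obtain ⟨u', hu', h₁, h₂⟩ :=
      exists_prefix_wordEff_eq_neg_one (i := j) ⟨u, List.prefix_rfl, by omega⟩
    exact hu ⟨u', hu', h₁, fun v hv hne => ⟨h₂ v hv hne, hj v (hv.trans hu')⟩⟩
  rw [capEff, if_pos hj]
  exact Int.toNat_of_nonneg hnonneg

theorem capEff_append_le_wordEff {B : ℕ} {u : List (Sig n)} {a : Sig n} {j : Fin n}
    (hua : u ++ [a] ∉ exitsBelow B j) (hj : ∀ v, v <+: u → wordEff v j ≤ B) :
    (capEff B (u ++ [a]) j : ℤ) ≤ wordEff (u ++ [a]) j := by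
  by_cases hj' : ∀ v, v <+: u ++ [a] → wordEff v j ≤ B
  · exact (capEff_eq_wordEff hua hj').le
  · push Not at hj'
    obtain ⟨v, hv, hvB⟩ := hj'
    rcases List.prefix_concat_iff.1 hv with rfl | hvu
    · rw [capEff, if_neg fun h => (h _ List.prefix_rfl).not_gt hvB]
      exact hvB.le
    · exact absurd (hj v hvu) hvB.not_ge

section Cover

variable {σ : Type*} (M : DFA (Sig n) σ)

def acceptingCounters (q : σ) : Set (Fin n → ℕ) :=
  {c | ∃ v, M.evalFrom q v ∈ M.accept ∧ ∀ u, u <+: v → ∀ j, 0 ≤ (c j : ℤ) + wordEff u j}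

theorem isUpperSet_acceptingCounters (q : σ) : IsUpperSet (acceptingCounters M q) := by
  rintro c c' hcc' ⟨v, hv, hc⟩
  refine ⟨v, hv, fun u hu j => ?_⟩
  have := hc u hu j
  have : c j ≤ c' j := hcc' j
  omega

variable {M}

theorem capEff_mem_acceptingCounters_of_step {B : ℕ}
    (hB : ∀ q, ∀ c ∈ acceptingCounters M q, (fun j => min (c j) B) ∈ acceptingCounters M q)
    {q : σ} {u : List (Sig n)} {a : Sig n} (hua : ∀ j, u ++ [a] ∉ exitsBelow B j)
    (h : capEff B (u ++ [a]) ∈ acceptingCounters M (M.step q a)) :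
    capEff B u ∈ acceptingCounters M q := by
  classical
  obtain ⟨v, hv, hvc⟩ := h
  have hu : ∀ j, u ∉ exitsBelow B j := fun j hu => hua j (append_mem_exitsBelow hu [a])
  -- Frozen counters are raised high enough to survive the whole continuation `a :: v`.
  let r : Fin n → ℕ := fun j =>
    if ∀ x, x <+: u → wordEff x j ≤ B then (wordEff u j).toNat else B + v.length + 1
  have hr : r ∈ acceptingCounters M q := by
    refine ⟨a :: v, hv, fun u' hu' j => ?_⟩
    rcases List.prefix_cons_iff.1 hu' with rfl | ⟨t, rfl, ht⟩
    · simp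
    · have hδ := letterEff_bounds a j
      have ht' := hvc t ht j
      simp only [wordEff_cons, Pi.add_apply]
      by_cases hj : ∀ x, x <+: u → wordEff x j ≤ B
      · have hrj : r j = capEff B u j := by simp only [r, capEff, if_pos hj]
        have h₂ := capEff_append_le_wordEff (hua j) hj
        simp only [wordEff_append, wordEff_cons, wordEff_nil, add_zero, Pi.add_apply] at h₂
        rw [hrj, capEff_eq_wordEff (hu j) hj]
        omega
      · have := neg_length_le_wordEff t j
        have := ht.length_le
        simp only [r, hj, if_false]
        push_cast
        omega
  have hcap : (fun j => min (r j) B) = capEff B u := by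
    funext j
    simp only [r, capEff]
    split_ifs with hj
    · have := hj u List.prefix_rfl
      omega
    · omega
  exact hcap ▸ hB q r hr

theorem zero_mem_acceptingCounters_start {B : ℕ}
    (hB : ∀ q, ∀ c ∈ acceptingCounters M q, (fun j => min (c j) B) ∈ acceptingCounters M q)
    (u : List (Sig n)) (hu : ∀ j, u ∉ exitsBelow B j)
    (h : capEff B u ∈ acceptingCounters M (M.eval u)) : 0 ∈ acceptingCounters M M.start := by
  induction u using List.reverseRecOn with
  | nil => simpa [capEff_nil] using h
  | append_singleton u a ih =>
    rw [DFA.eval_append_singleton] at h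
    exact ih (fun j hj => hu j (append_mem_exitsBelow hj [a]))
      (capEff_mem_acceptingCounters_of_step hB hu h)

theorem exists_forall_mem_exitsBelow [Finite σ] (hM : ∀ w ∈ M.accepts, w ∉ CovDyck n) :
    ∃ B : ℕ, ∀ w ∈ M.accepts, ∃ i, w ∈ exitsBelow B i := by
  obtain ⟨B, hB⟩ := exists_min_const_mem_of_isUpperSet (isUpperSet_acceptingCounters M)
  refine ⟨B, fun w hw => ?_⟩
  by_contra! hw'
  obtain ⟨v, hv, hv₀⟩ := zero_mem_acceptingCounters_start hB w hw'
    ⟨[], hw, fun u hu j => by simp [List.prefix_nil.1 hu]⟩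
  exact hM v hv fun u hu j => by simpa using hv₀ u hu j

end Cover

end

theorem stmt10_general (n : ℕ) :
    ∃ S ⊆ RFam n 2, IsBasicSepSet (CovDyck n) S := by
  refine ⟨{K | ∃ k, 1 ≤ k ∧ ∃ i, K = covSeparator k i}, ?_, ?_, ?_⟩
  · rintro K ⟨k, -, i, rfl⟩
    exact covSeparator_mem_rFam k i
  · rintro K ⟨k, hk, i, rfl⟩
    rw [covSeparator_eq_exitsBelow hk]
    exact ⟨exitsBelow_isRegular k i, fun w hw => exitsBelow_disjoint_covDyck hw⟩
  · rintro L ⟨σ, _, M, rfl⟩ hL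
    obtain ⟨B, hB⟩ := exists_forall_mem_exitsBelow hL
    refine ⟨Set.range (covSeparator (B + 1)), ?_, Set.finite_range _, fun w hw => ?_⟩
    · rintro K ⟨i, rfl⟩
      exact ⟨B + 1, by omega, i, rfl⟩
    · obtain ⟨i, hi⟩ := hB w hw
      refine ⟨_, ⟨i, rfl⟩, ?_⟩
      rw [covSeparator_eq_exitsBelow (by omega)]
      exact exitsBelow_mono (by omega) i hi

theorem stmt10 (n : ℕ) (hn : 1 ≤ n) :
    ∃ S ⊆ RFam n 2, IsBasicSepSet (CovDyck n) S :=
  stmt10_general n
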